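/- Let A be a synaptic algebra whose projection lattice P is a complete lattice, and let p ∈ P. Then the central cover of p satisfies γp = ⋁{q ∈ P : q ≼ p}. -/
import Mathlib


/-- For subsets `A, B` of a ring `R`, the commutant of `B` within `A`:
`C(B) = {x ∈ A : x b = b x for all b ∈ B}`. -/
def SynComm {R : Type*} [Ring R] (A : Set R) (B : Set R) : Set R :=
  {x | x ∈ A ∧ ∀ b ∈ B, x * b = b * x}

/-- A synaptic algebra: a real vector subspace `A` of a real linear associative
algebra `R` with unity, satisfying axioms SA1–SA8 of Foulis.  The partial order
is recorded as a relation `le` on `R`, whose axioms are imposed on elements of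
`A`; `1` is an order unit, the order is archimedean, and the norm convergence
occurring in SA8 is expressed via the order-unit characterization
`‖a‖ ≤ ε ↔ -ε•1 ≤ a ≤ ε•1`. -/
structure SynapticAlgebra (R : Type*) [Ring R] [Algebra ℝ R] where
  A : Set R
  zero_mem : (0 : R) ∈ A
  one_mem : (1 : R) ∈ A
  add_mem : ∀ {a b : R}, a ∈ A → b ∈ A → a + b ∈ A
  smul_mem : ∀ (r : ℝ) {a : R}, a ∈ A → r • a ∈ A
  /-- the partial order on `A` (SA1) -/
  le : R → R → Prop
  le_refl : ∀ a ∈ A, le a a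
  le_trans : ∀ a ∈ A, ∀ b ∈ A, ∀ c ∈ A, le a b → le b c → le a c
  le_antisymm : ∀ a ∈ A, ∀ b ∈ A, le a b → le b a → a = b
  add_le_add : ∀ a ∈ A, ∀ b ∈ A, ∀ c ∈ A, le a b → le (a + c) (b + c)
  smul_nonneg : ∀ (r : ℝ), 0 ≤ r → ∀ a ∈ A, le 0 a → le 0 (r • a)
  /-- SA1: the ordered vector space `A` is archimedean -/
  archimedean : ∀ a ∈ A, ∀ b ∈ A, (∀ n : ℕ, le (n • a) b) → le a 0
  /-- SA1: `1` is an order unit for `A` -/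
  orderUnit : ∀ a ∈ A, ∃ r : ℝ, le a (r • (1 : R))
  /-- SA2 (together with closure of `A` under squaring) -/
  sq_mem : ∀ a ∈ A, a * a ∈ A
  sq_nonneg : ∀ a ∈ A, le 0 (a * a)
  /-- SA3 -/
  SA3 : ∀ a ∈ A, ∀ b ∈ A, le 0 a → le 0 b → le 0 (a * b * a)
  /-- SA4 -/
  SA4 : ∀ a ∈ A, ∀ b ∈ A, le 0 b → a * b * a = 0 → a * b = 0 ∧ b * a = 0
  /-- SA5: positive elements have square roots in `CC(a)` -/
  SA5 : ∀ a ∈ A, le 0 a →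
    ∃ b ∈ SynComm A (SynComm A {a}), le 0 b ∧ b * b = a
  /-- SA6: existence of carrier projections -/
  SA6 : ∀ a ∈ A, ∃ p ∈ A, p * p = p ∧ ∀ b ∈ A, (a * b = 0 ↔ p * b = 0)
  /-- SA7: elements above `1` are invertible -/
  SA7 : ∀ a ∈ A, le 1 a → ∃ b ∈ A, a * b = 1 ∧ b * a = 1
  /-- SA8: commutants are closed under norm limits of ascending commuting sequences -/
  SA8 : ∀ a ∈ A, ∀ b ∈ A, ∀ f : ℕ → R, (∀ n, f n ∈ A) →
    (∀ n, f n * b = b * f n) → (∀ n m, f n * f m = f m * f n) →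
    (∀ n, le (f n) (f (n + 1))) →
    (∀ ε : ℝ, 0 < ε → ∃ N : ℕ, ∀ n ≥ N,
        le (a - f n) (ε • (1 : R)) ∧ le ((-ε) • (1 : R)) (a - f n)) →
    a * b = b * a
  /-- non-degeneracy: `0 ≠ 1` -/
  nondegenerate : (0 : R) ≠ 1

namespace SynapticAlgebra

variable {R : Type*} [Ring R] [Algebra ℝ R] (S : SynapticAlgebra R)

/-- The set `P` of projections of the synaptic algebra. -/
def Proj : Set R := {p | p ∈ S.A ∧ p * p = p}

/-- A symmetry: an element `s ∈ A` with `s² = 1`. -/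
def IsSymmetry (s : R) : Prop := s ∈ S.A ∧ s * s = 1

/-- Projections `e` and `f` are exchanged by a symmetry. -/
def ExchBySym (e f : R) : Prop := ∃ s, S.IsSymmetry s ∧ s * e * s = f

/-- `p ∼ q`: equivalence of projections induced by finite sequences of
symmetries, i.e. `q = sₙ ⋯ s₁ p s₁ ⋯ sₙ`. -/
def Equiv (p q : R) : Prop := Relation.ReflTransGen S.ExchBySym p q

/-- `p` and `q` are related: they have nonzero equivalent subprojections. -/
def Related (p q : R) : Prop :=
  ∃ p₁ ∈ S.Proj, ∃ q₁ ∈ S.Proj, p₁ ≠ 0 ∧ q₁ ≠ 0 ∧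
    S.le p₁ p ∧ S.le q₁ q ∧ S.Equiv p₁ q₁

/-- `p ≼ q`: `p` is equivalent to a subprojection of `q`. -/
def SubEquiv (p q : R) : Prop := ∃ q₁ ∈ S.Proj, S.le q₁ q ∧ S.Equiv p q₁

/-- `c` commutes with every element of `A` (so a projection `c` with this
property is a central projection, `c ∈ P ∩ C(A)`). -/
def IsCentral (c : R) : Prop := ∀ a ∈ S.A, c * a = a * c

/-- `m = e ∧ f`, the infimum of `e` and `f` in the projection lattice `P`. -/
def IsMeet (e f m : R) : Prop :=
  m ∈ S.Proj ∧ S.le m e ∧ S.le m f ∧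
    ∀ r ∈ S.Proj, S.le r e → S.le r f → S.le r m

/-- `j = e ∨ f`, the supremum of `e` and `f` in the projection lattice `P`. -/
def IsJoin (e f j : R) : Prop :=
  j ∈ S.Proj ∧ S.le e j ∧ S.le f j ∧
    ∀ r ∈ S.Proj, S.le e r → S.le f r → S.le j r

/-- `m = ⋁ Q`, the supremum of the set `Q` in the projection lattice `P`. -/
def IsSupOf (Q : Set R) (m : R) : Prop :=
  m ∈ S.Proj ∧ (∀ q ∈ Q, S.le q m) ∧
    ∀ b ∈ S.Proj, (∀ q ∈ Q, S.le q b) → S.le m b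

/-- `m = ⋀ Q`, the infimum of the set `Q` in the projection lattice `P`. -/
def IsInfOf (Q : Set R) (m : R) : Prop :=
  m ∈ S.Proj ∧ (∀ q ∈ Q, S.le m q) ∧
    ∀ b ∈ S.Proj, (∀ q ∈ Q, S.le b q) → S.le b m

/-- The projection lattice `P` is a complete lattice: every subset of `P`
has a supremum and an infimum in `P`. -/
def ProjComplete : Prop :=
  ∀ Q ⊆ S.Proj, (∃ m, S.IsSupOf Q m) ∧ (∃ m, S.IsInfOf Q m)

/-- The projection lattice `P` is centrally orthocomplete: every family of
projections dominated by a pairwise orthogonal family of central projections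
has a supremum in `P`. -/
def CentrallyOrthocomplete : Prop :=
  ∀ Q ⊆ S.Proj, ∀ c : R → R,
    (∀ q ∈ Q, c q ∈ S.Proj ∧ S.IsCentral (c q) ∧ S.le q (c q)) →
    (∀ q ∈ Q, ∀ q' ∈ Q, q ≠ q' → c q * c q' = 0) →
    ∃ m, S.IsSupOf Q m

/-- `c = γ p`: `c` is the central cover of `p`, the smallest central
projection dominating `p`. -/
def IsCentralCover (p c : R) : Prop :=
  c ∈ S.Proj ∧ S.IsCentral c ∧ S.le p c ∧
    ∀ d ∈ S.Proj, S.IsCentral d → S.le p d → S.le c d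

/-- `x = φ_e(f) = e ∧ (e^⊥ ∨ f)`, the Sasaki projection of `f` determined
by `e`, in the projection lattice `P` (where `e^⊥ = 1 - e`). -/
def IsSasaki (e f x : R) : Prop :=
  ∃ j, S.IsJoin (1 - e) f j ∧ S.IsMeet e j x

/-- Mackey compatibility of projections `p` and `q` in the OML `P`:
there are pairwise orthogonal projections `p₁, q₁, d` with `p = p₁ ∨ d = p₁ + d`
and `q = q₁ ∨ d = q₁ + d` (orthogonal projections satisfy `pq = qp = 0` and
their join is their sum). -/
def Compatible (p q : R) : Prop :=
  ∃ p₁ ∈ S.Proj, ∃ q₁ ∈ S.Proj, ∃ d ∈ S.Proj,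
    p₁ * q₁ = 0 ∧ q₁ * p₁ = 0 ∧ p₁ * d = 0 ∧ d * p₁ = 0 ∧
    q₁ * d = 0 ∧ d * q₁ = 0 ∧ p = p₁ + d ∧ q = q₁ + d



variable {R : Type*} [Ring R] [Algebra ℝ R] (S : SynapticAlgebra R)

/-! ### Membership lemmas -/

lemma neg_mem {a : R} (ha : a ∈ S.A) : -a ∈ S.A := by
  have := S.smul_mem (-1) ha; simpa using this

lemma sub_mem' {a b : R} (ha : a ∈ S.A) (hb : b ∈ S.A) : a - b ∈ S.A := by
  have := S.add_mem ha (S.neg_mem hb); simpa [sub_eq_add_neg] using this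

lemma jordan_mem {a b : R} (ha : a ∈ S.A) (hb : b ∈ S.A) : a * b + b * a ∈ S.A := by
  have h1 := S.sq_mem (a + b) (S.add_mem ha hb)
  have h2 : a * b + b * a = (a + b) * (a + b) - a * a - b * b := by noncomm_ring
  rw [h2]
  exact S.sub_mem' (S.sub_mem' h1 (S.sq_mem a ha)) (S.sq_mem b hb)

lemma triple_mem {a b : R} (ha : a ∈ S.A) (hb : b ∈ S.A) : a * b * a ∈ S.A := by
  have h1 := S.jordan_mem ha (S.jordan_mem ha hb)
  have h2 := S.jordan_mem (S.sq_mem a ha) hb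
  have h3 : a * b * a = (2⁻¹ : ℝ) • ((a * (a * b + b * a) + (a * b + b * a) * a)
      - (a * a * b + b * (a * a))) := by
    have : (a * (a * b + b * a) + (a * b + b * a) * a) - (a * a * b + b * (a * a))
        = a * b * a + a * b * a := by noncomm_ring
    rw [this, ← two_smul ℝ (a * b * a), smul_smul]
    norm_num
  rw [h3]
  exact S.smul_mem _ (S.sub_mem' h1 h2)

lemma tripleSym_mem {x y z : R} (hx : x ∈ S.A) (hy : y ∈ S.A) (hz : z ∈ S.A) :
    x * z * y + y * z * x ∈ S.A := by
  have h1 := S.triple_mem (S.add_mem hx hy) hz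
  have h2 : x * z * y + y * z * x = (x + y) * z * (x + y) - x * z * x - y * z * y := by
    noncomm_ring
  rw [h2]
  exact S.sub_mem' (S.sub_mem' h1 (S.triple_mem hx hz)) (S.triple_mem hy hz)

/-! ### Order lemmas -/

lemma le_sub_iff {a b : R} (ha : a ∈ S.A) (hb : b ∈ S.A) :
    S.le a b ↔ S.le 0 (b - a) := by
  constructor
  · intro h
    have := S.add_le_add a ha b hb (-a) (S.neg_mem ha) h
    simpa [sub_eq_add_neg] using this
  · intro h
    have := S.add_le_add 0 S.zero_mem (b - a) (S.sub_mem' hb ha) a ha h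
    simpa using this

lemma add_nonneg' {x y : R} (hx : x ∈ S.A) (hy : y ∈ S.A)
    (h1 : S.le 0 x) (h2 : S.le 0 y) : S.le 0 (x + y) := by
  have h3 := S.add_le_add 0 S.zero_mem x hx y hy h1
  have h4 : S.le y (x + y) := by simpa using h3
  exact S.le_trans 0 S.zero_mem y hy (x + y) (S.add_mem hx hy) h2 h4

lemma one_nonneg : S.le 0 (1 : R) := by
  have := S.sq_nonneg 1 S.one_mem; simpa using this

lemma sq_eq_zero {x : R} (hx : x ∈ S.A) (h : x * x = 0) : x = 0 := by
  have h1 := S.SA4 x hx 1 S.one_mem S.one_nonneg (by simpa using h)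
  simpa using h1.1

/-- In `A`, `x*y = 0` implies `y*x = 0`. -/
lemma mul_eq_zero_symm {x y : R} (hx : x ∈ S.A) (hy : y ∈ S.A) (h : x * y = 0) :
    y * x = 0 := by
  have hw : y * x ∈ S.A := by
    have := S.jordan_mem hy hx
    rwa [h, add_zero] at this
  apply S.sq_eq_zero hw
  calc y * x * (y * x) = y * (x * y) * x := by noncomm_ring
  _ = 0 := by rw [h]; noncomm_ring


/-! ### Projection lemmas -/

lemma proj_mem {p : R} (hp : p ∈ S.Proj) : p ∈ S.A := hp.1

lemma proj_nonneg {p : R} (hp : p ∈ S.Proj) : S.le 0 p := by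
  have := S.sq_nonneg p hp.1; rwa [hp.2] at this

lemma one_sub_proj {p : R} (hp : p ∈ S.Proj) : (1 - p) ∈ S.Proj := by
  refine ⟨S.sub_mem' S.one_mem hp.1, ?_⟩
  calc (1 - p) * (1 - p) = 1 - p - p + p * p := by noncomm_ring
  _ = 1 - p := by rw [hp.2]; abel

lemma proj_le_one {p : R} (hp : p ∈ S.Proj) : S.le p 1 := by
  rw [S.le_sub_iff hp.1 S.one_mem]
  exact S.proj_nonneg (S.one_sub_proj hp)

lemma smul_one_nonneg {r : ℝ} (hr : 0 ≤ r) : S.le 0 (r • (1 : R)) :=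
  S.smul_nonneg r hr 1 S.one_mem S.one_nonneg

/-- `p ≤ q` iff `pq = qp = p`, for projections. -/
lemma proj_le_iff {p q : R} (hp : p ∈ S.Proj) (hq : q ∈ S.Proj) :
    S.le p q ↔ p * q = p ∧ q * p = p := by
  constructor
  · intro h
    have hsub : S.le 0 (q - p) := (S.le_sub_iff hp.1 hq.1).1 h
    have h1 : S.le 0 (p * (q - p) * p) :=
      S.SA3 p hp.1 (q - p) (S.sub_mem' hq.1 hp.1) (S.proj_nonneg hp) hsub
    have hq1 : S.le 0 (1 - q) := S.proj_nonneg (S.one_sub_proj hq)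
    have h2 : S.le 0 (p * (1 - q) * p) :=
      S.SA3 p hp.1 (1 - q) (S.sub_mem' S.one_mem hq.1) (S.proj_nonneg hp) hq1
    have e1 : p * (q - p) * p = p * q * p - p := by
      calc p * (q - p) * p = p * q * p - p * p * p := by noncomm_ring
      _ = p * q * p - p := by rw [hp.2, hp.2]
    have e2 : p * (1 - q) * p = p - p * q * p := by
      calc p * (1 - q) * p = p * p - p * q * p := by noncomm_ring
      _ = p - p * q * p := by rw [hp.2]
    have hpqp : p * q * p ∈ S.A := S.triple_mem hp.1 hq.1
    have heq : p * q * p = p := by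
      apply S.le_antisymm _ hpqp _ hp.1
      · rw [S.le_sub_iff hpqp hp.1]
        rw [e2] at h2; exact h2
      · rw [S.le_sub_iff hp.1 hpqp]
        rw [e1] at h1; exact h1
    have hz : p * (1 - q) * p = 0 := by rw [e2, heq, sub_self]
    have h4 := S.SA4 p hp.1 (1 - q) (S.sub_mem' S.one_mem hq.1) hq1 hz
    constructor
    · have := h4.1; rw [mul_sub, mul_one, sub_eq_zero] at this; exact this.symm
    · have := h4.2; rw [sub_mul, one_mul, sub_eq_zero] at this; exact this.symm
  · rintro ⟨h1, h2⟩
    rw [S.le_sub_iff hp.1 hq.1]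
    have hsq : (q - p) * (q - p) = q - p := by
      rw [sub_mul, mul_sub, mul_sub, hq.2, hp.2, h1, h2]; abel
    have := S.sq_nonneg (q - p) (S.sub_mem' hq.1 hp.1)
    rwa [hsq] at this

/-- `pq = p` implies `qp = p` for projections. -/
lemma proj_mul_symm {p q : R} (hp : p ∈ S.Proj) (hq : q ∈ S.Proj) (h : p * q = p) :
    q * p = p := by
  have hqp : q * p ∈ S.A := by
    have hj := S.jordan_mem hp.1 hq.1
    rw [h] at hj
    have he : q * p = (p + q * p) - p := by noncomm_ring
    rw [he]; exact S.sub_mem' hj hp.1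
  have k1 : p * (q * p) = p := by rw [← mul_assoc, h, hp.2]
  have k2 : q * p * (q * p) = q * p := by rw [mul_assoc, k1]
  have k3 : q * p * p = q * p := by rw [mul_assoc, hp.2]
  have hw : (q * p - p) * (q * p - p) = 0 := by
    have expand : (q * p - p) * (q * p - p)
        = q * p * (q * p) - q * p * p - p * (q * p) + p * p := by noncomm_ring
    rw [expand, k2, k3, k1, hp.2]; abel
  have := S.sq_eq_zero (S.sub_mem' hqp hp.1) hw
  rw [sub_eq_zero] at this; exact this

lemma proj_le_of_mul {p q : R} (hp : p ∈ S.Proj) (hq : q ∈ S.Proj) (h : p * q = p) :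
    S.le p q :=
  (S.proj_le_iff hp hq).2 ⟨h, S.proj_mul_symm hp hq h⟩

/-- conjugation monotone: for a projection `e` and `x ≤ y`, `e x e ≤ e y e`. -/
lemma conj_le_conj {e x y : R} (he : e ∈ S.Proj) (hx : x ∈ S.A) (hy : y ∈ S.A)
    (h : S.le x y) : S.le (e * x * e) (e * y * e) := by
  have hsub := (S.le_sub_iff hx hy).1 h
  have h1 := S.SA3 e he.1 (y - x) (S.sub_mem' hy hx) (S.proj_nonneg he) hsub
  have e1 : e * (y - x) * e = e * y * e - e * x * e := by noncomm_ring
  rw [e1] at h1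
  exact (S.le_sub_iff (S.triple_mem he.1 hx) (S.triple_mem he.1 hy)).2 h1


/-! ### Carrier projections -/

open Classical in
noncomputable def carr (a : R) : R :=
  if h : a ∈ S.A then (S.SA6 a h).choose else 0

lemma carr_spec {a : R} (ha : a ∈ S.A) :
    S.carr a ∈ S.A ∧ (S.carr a * S.carr a = S.carr a) ∧
      ∀ b ∈ S.A, (a * b = 0 ↔ S.carr a * b = 0) := by
  rw [carr, dif_pos ha]
  obtain ⟨h1, h2, h3⟩ := (S.SA6 a ha).choose_spec
  exact ⟨h1, h2, h3⟩

lemma carr_proj {a : R} (ha : a ∈ S.A) : S.carr a ∈ S.Proj :=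
  ⟨(S.carr_spec ha).1, (S.carr_spec ha).2.1⟩

lemma carr_mul_zero {a b : R} (ha : a ∈ S.A) (hb : b ∈ S.A) (h : a * b = 0) :
    S.carr a * b = 0 :=
  ((S.carr_spec ha).2.2 b hb).1 h

lemma zero_mul_carr {a b : R} (ha : a ∈ S.A) (hb : b ∈ S.A) (h : a * b = 0) :
    b * S.carr a = 0 :=
  S.mul_eq_zero_symm (S.carr_proj ha).1 hb (S.carr_mul_zero ha hb h)

lemma mul_carr_self {a : R} (ha : a ∈ S.A) : a * S.carr a = a := by
  have h1 : S.carr a * (1 - S.carr a) = 0 := by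
    rw [mul_sub, mul_one, (S.carr_spec ha).2.1, sub_self]
  have h2 : a * (1 - S.carr a) = 0 :=
    ((S.carr_spec ha).2.2 (1 - S.carr a) (S.sub_mem' S.one_mem (S.carr_proj ha).1)).2 h1
  rw [mul_sub, mul_one, sub_eq_zero] at h2; exact h2.symm

lemma carr_mul_self {a : R} (ha : a ∈ S.A) : S.carr a * a = a := by
  have h1 : a * (1 - S.carr a) = 0 := by
    rw [mul_sub, mul_one, S.mul_carr_self ha, sub_self]
  have h2 : (1 - S.carr a) * a = 0 :=
    S.mul_eq_zero_symm ha (S.sub_mem' S.one_mem (S.carr_proj ha).1) h1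
  rw [sub_mul, one_mul, sub_eq_zero] at h2; exact h2.symm

/-- Everything in `A` commuting with `a` commutes with `carr a`. -/
lemma carr_comm {a z : R} (ha : a ∈ S.A) (hz : z ∈ S.A) (h : z * a = a * z) :
    z * S.carr a = S.carr a * z := by
  set e := S.carr a with he
  have heA : e ∈ S.A := (S.carr_proj ha).1
  have hee : e * e = e := (S.carr_spec ha).2.1
  have hb1 : z * (1 - e) + (1 - e) * z ∈ S.A :=
    S.jordan_mem hz (S.sub_mem' S.one_mem heA)
  have hab : a * (z * (1 - e) + (1 - e) * z) = 0 := by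
    have k1 : a * (z * (1 - e)) = z * (a * (1 - e)) := by
      rw [← mul_assoc, ← h, mul_assoc]
    have k2 : a * (1 - e) = 0 := by
      rw [mul_sub, mul_one, S.mul_carr_self ha, sub_self]
    rw [mul_add, k1, k2, mul_zero, ← mul_assoc, k2, zero_mul, add_zero]
  have heb := S.carr_mul_zero ha hb1 hab
  -- e * (z * (1-e) + (1-e) * z) = e*z*(1-e)
  have k3 : e * (z * (1 - e) + (1 - e) * z) = e * z * (1 - e) := by
    have : e * ((1 - e) * z) = 0 := by
      rw [← mul_assoc, mul_sub, mul_one, hee, sub_self, zero_mul]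
    rw [mul_add, this, add_zero, mul_assoc]
  rw [← he] at heb
  rw [k3] at heb
  -- so e*z*e = e*z
  have k4 : e * z * e = e * z := by
    have : e * z * (1 - e) = e * z - e * z * e := by noncomm_ring
    rw [this, sub_eq_zero] at heb; exact heb.symm
  -- now w := (1-e)*z*e ; w + e*z*(1-e) ∈ A and w² = 0
  have hw : (1 - e) * z * e ∈ S.A := by
    have h5 := S.tripleSym_mem (S.sub_mem' S.one_mem heA) heA hz
    rwa [heb, add_zero] at h5
  have hw2 : ((1 - e) * z * e) * ((1 - e) * z * e) = 0 := by
    have : ((1 - e) * z * e) * ((1 - e) * z * e)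
        = (1 - e) * z * (e * (1 - e)) * (z * e) := by noncomm_ring
    rw [this, mul_sub, mul_one, hee, sub_self, mul_zero, zero_mul]
  have hw0 : (1 - e) * z * e = 0 := S.sq_eq_zero hw hw2
  have k5 : z * e = e * z * e := by
    have : (1 - e) * z * e = z * e - e * z * e := by noncomm_ring
    rw [this, sub_eq_zero] at hw0; exact hw0
  rw [k5, k4]

/-! ### Square roots -/

open Classical in
noncomputable def sqrtS (a : R) : R :=
  if h : a ∈ S.A ∧ S.le 0 a then (S.SA5 a h.1 h.2).choose else 0

lemma sqrtS_spec {a : R} (ha : a ∈ S.A) (h0 : S.le 0 a) :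
    S.sqrtS a ∈ S.A ∧ S.le 0 (S.sqrtS a) ∧ S.sqrtS a * S.sqrtS a = a ∧
      ∀ z ∈ S.A, z * a = a * z → z * S.sqrtS a = S.sqrtS a * z := by
  rw [sqrtS, dif_pos ⟨ha, h0⟩]
  obtain ⟨hmem, hpos, hsq⟩ := (S.SA5 a ha h0).choose_spec
  refine ⟨hmem.1, hpos, hsq, ?_⟩
  intro z hzA hz
  exact (hmem.2 z ⟨hzA, by intro b hb; rw [Set.mem_singleton_iff] at hb; rw [hb]; exact hz⟩).symm

/-- Uniqueness of nonneg commuting square roots. -/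
lemma sqrt_unique {b b' : R} (hb : b ∈ S.A) (hb' : b' ∈ S.A)
    (h0 : S.le 0 b) (h0' : S.le 0 b') (hsq : b * b = b' * b') (hcomm : b * b' = b' * b) :
    b = b' := by
  set c := b - b' with hc
  have hcA : c ∈ S.A := S.sub_mem' hb hb'
  have hsA : b + b' ∈ S.A := S.add_mem hb hb'
  have hcs : c * (b + b') = 0 := by
    rw [hc, sub_mul, mul_add, mul_add, hsq, hcomm]; abel
  set e := S.carr c with he
  have heA : e ∈ S.A := (S.carr_proj hcA).1
  have h1 : e * (b + b') = 0 := S.carr_mul_zero hcA hsA hcs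
  have h2 : (b + b') * e = 0 := S.zero_mul_carr hcA hsA hcs
  have hce : c * e = c := S.mul_carr_self hcA
  have hec : e * c = c := S.carr_mul_self hcA
  -- c = e*c*e = e*b*e - e*b'*e ; and e*b*e + e*b'*e = e*(b+b')*e = 0
  have hebe : S.le 0 (e * b * e) :=
    S.SA3 e heA b hb (S.proj_nonneg (S.carr_proj hcA)) h0
  have hebe' : S.le 0 (e * b' * e) :=
    S.SA3 e heA b' hb' (S.proj_nonneg (S.carr_proj hcA)) h0'
  have hsum : e * b * e + e * b' * e = 0 := by
    have : e * b * e + e * b' * e = e * (b + b') * e := by noncomm_ring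
    rw [this, h1, zero_mul]
  have hbe0 : e * b * e = 0 := by
    apply S.le_antisymm _ (S.triple_mem heA hb) 0 S.zero_mem _ hebe
    · have h3 : S.le (0 + e * b * e) (e * b' * e + e * b * e) :=
        S.add_le_add 0 S.zero_mem (e * b' * e) (S.triple_mem heA hb')
          (e * b * e) (S.triple_mem heA hb) hebe'
      have h4 : e * b' * e + e * b * e = 0 := by rw [add_comm] at hsum; exact hsum
      rw [zero_add, h4] at h3; exact h3
  have hbe0' : e * b' * e = 0 := by rw [← hsum, hbe0, zero_add]
  have : c = 0 := by
    have k : c = e * c * e := by rw [hec, hce]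
    have k2 : e * (b - b') * e = e * b * e - e * b' * e := by noncomm_ring
    rw [k, hc, k2, hbe0, hbe0', sub_self]
  rw [hc, sub_eq_zero] at this; exact this


/-! ### Positive and negative parts -/

noncomputable def posP (x : R) : R := (2⁻¹ : ℝ) • (S.sqrtS (x * x) + x)
noncomputable def negP (x : R) : R := (2⁻¹ : ℝ) • (S.sqrtS (x * x) - x)

lemma sqx_mem {x : R} (hx : x ∈ S.A) : x * x ∈ S.A := S.sq_mem x hx
lemma sqx_nonneg {x : R} (hx : x ∈ S.A) : S.le 0 (x * x) := S.sq_nonneg x hx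

lemma sqrtx_mem {x : R} (hx : x ∈ S.A) : S.sqrtS (x * x) ∈ S.A :=
  (S.sqrtS_spec (S.sqx_mem hx) (S.sqx_nonneg hx)).1
lemma sqrtx_nonneg {x : R} (hx : x ∈ S.A) : S.le 0 (S.sqrtS (x * x)) :=
  (S.sqrtS_spec (S.sqx_mem hx) (S.sqx_nonneg hx)).2.1
lemma sqrtx_sq {x : R} (hx : x ∈ S.A) : S.sqrtS (x * x) * S.sqrtS (x * x) = x * x :=
  (S.sqrtS_spec (S.sqx_mem hx) (S.sqx_nonneg hx)).2.2.1

lemma sqrtx_comm_x {x : R} (hx : x ∈ S.A) : x * S.sqrtS (x * x) = S.sqrtS (x * x) * x :=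
  (S.sqrtS_spec (S.sqx_mem hx) (S.sqx_nonneg hx)).2.2.2 x hx (by rw [mul_assoc])

lemma sqrtx_comm {x : R} (hx : x ∈ S.A) {z : R} (hz : z ∈ S.A) (h : z * x = x * z) :
    z * S.sqrtS (x * x) = S.sqrtS (x * x) * z :=
  (S.sqrtS_spec (S.sqx_mem hx) (S.sqx_nonneg hx)).2.2.2 z hz
    (by rw [← mul_assoc, h, mul_assoc, h, mul_assoc])

lemma posP_mem {x : R} (hx : x ∈ S.A) : S.posP x ∈ S.A :=
  S.smul_mem _ (S.add_mem (S.sqrtx_mem hx) hx)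
lemma negP_mem {x : R} (hx : x ∈ S.A) : S.negP x ∈ S.A :=
  S.smul_mem _ (S.sub_mem' (S.sqrtx_mem hx) hx)

lemma posP_sub_negP (x : R) : S.posP x - S.negP x = x := by
  rw [posP, negP, ← smul_sub]
  have : S.sqrtS (x * x) + x - (S.sqrtS (x * x) - x) = x + x := by abel
  rw [this, ← two_smul ℝ x, smul_smul]; norm_num

lemma posP_add_negP (x : R) : S.posP x + S.negP x = S.sqrtS (x * x) := by
  rw [posP, negP, ← smul_add]
  have : S.sqrtS (x * x) + x + (S.sqrtS (x * x) - x) = S.sqrtS (x * x) + S.sqrtS (x * x) := by abel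
  rw [this, ← two_smul ℝ _, smul_smul]; norm_num

lemma posP_mul_negP {x : R} (hx : x ∈ S.A) : S.posP x * S.negP x = 0 := by
  rw [posP, negP, smul_mul_assoc, mul_smul_comm, smul_smul]
  have : (S.sqrtS (x * x) + x) * (S.sqrtS (x * x) - x)
      = S.sqrtS (x * x) * S.sqrtS (x * x) - x * x
        + (x * S.sqrtS (x * x) - S.sqrtS (x * x) * x) := by noncomm_ring
  rw [this, S.sqrtx_sq hx, S.sqrtx_comm_x hx, sub_self, sub_self, add_zero, smul_zero]

lemma negP_mul_posP {x : R} (hx : x ∈ S.A) : S.negP x * S.posP x = 0 := by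
  rw [posP, negP, smul_mul_assoc, mul_smul_comm, smul_smul]
  have : (S.sqrtS (x * x) - x) * (S.sqrtS (x * x) + x)
      = S.sqrtS (x * x) * S.sqrtS (x * x) - x * x
        + (S.sqrtS (x * x) * x - x * S.sqrtS (x * x)) := by noncomm_ring
  rw [this, S.sqrtx_sq hx, ← S.sqrtx_comm_x hx, sub_self, sub_self, add_zero, smul_zero]

lemma negP_nonneg {x : R} (hx : x ∈ S.A) : S.le 0 (S.negP x) := by
  set r := S.sqrtS (x * x) with hr
  have huA : r - x ∈ S.A := S.sub_mem' (S.sqrtx_mem hx) hx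
  have hvA : r + x ∈ S.A := S.add_mem (S.sqrtx_mem hx) hx
  have h5 : S.negP x * S.posP x = (4⁻¹ : ℝ) • ((r - x) * (r + x)) := by
    rw [negP, posP, smul_mul_assoc, mul_smul_comm, smul_smul, ← hr]
    norm_num
  have huv : (r - x) * (r + x) = 0 := by
    have h6 := S.negP_mul_posP hx
    rw [h5] at h6
    have h7 : (r - x) * (r + x) = (4 : ℝ) • ((4⁻¹ : ℝ) • ((r - x) * (r + x))) := by
      rw [smul_smul]; norm_num
    rw [h7, h6, smul_zero]
  set e := S.carr (r - x) with he
  have heP : e ∈ S.Proj := S.carr_proj huA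
  have hev : e * (r + x) = 0 := S.carr_mul_zero huA hvA huv
  have hue : (r - x) * e = r - x := S.mul_carr_self huA
  have heu : e * (r - x) = r - x := S.carr_mul_self huA
  have key : r - x = e * ((r - x) + (r + x)) * e := by
    have h1 : e * ((r - x) + (r + x)) * e = e * (r - x) * e + e * (r + x) * e := by
      noncomm_ring
    have h2 : e * (r - x) * e = r - x := by rw [heu, hue]
    have h3 : e * (r + x) * e = 0 := by rw [hev, zero_mul]
    rw [h1, h2, h3, add_zero]
  have k2 : r - x = e * r * e + e * r * e := by
    have h8 : (r - x) + (r + x) = r + r := by abel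
    rw [key, h8]; noncomm_ring
  have hpos : S.le 0 (e * r * e) :=
    S.SA3 e heP.1 r (S.sqrtx_mem hx) (S.proj_nonneg heP) (S.sqrtx_nonneg hx)
  have h9 : S.le 0 (r - x) := by
    rw [k2]
    exact S.add_nonneg' (S.triple_mem heP.1 (S.sqrtx_mem hx))
      (S.triple_mem heP.1 (S.sqrtx_mem hx)) hpos hpos
  have h10 : S.le 0 ((2⁻¹ : ℝ) • (r - x)) := S.smul_nonneg _ (by norm_num) _ huA h9
  rw [negP, ← hr]; exact h10

lemma posP_nonneg {x : R} (hx : x ∈ S.A) : S.le 0 (S.posP x) := by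
  set r := S.sqrtS (x * x) with hr
  have huA : r - x ∈ S.A := S.sub_mem' (S.sqrtx_mem hx) hx
  have hvA : r + x ∈ S.A := S.add_mem (S.sqrtx_mem hx) hx
  have h5 : S.posP x * S.negP x = (4⁻¹ : ℝ) • ((r + x) * (r - x)) := by
    rw [negP, posP, smul_mul_assoc, mul_smul_comm, smul_smul, ← hr]
    norm_num
  have huv : (r + x) * (r - x) = 0 := by
    have h6 := S.posP_mul_negP hx
    rw [h5] at h6
    have h7 : (r + x) * (r - x) = (4 : ℝ) • ((4⁻¹ : ℝ) • ((r + x) * (r - x))) := by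
      rw [smul_smul]; norm_num
    rw [h7, h6, smul_zero]
  set e := S.carr (r + x) with he
  have heP : e ∈ S.Proj := S.carr_proj hvA
  have hev : e * (r - x) = 0 := S.carr_mul_zero hvA huA huv
  have hue : (r + x) * e = r + x := S.mul_carr_self hvA
  have heu : e * (r + x) = r + x := S.carr_mul_self hvA
  have key : r + x = e * ((r + x) + (r - x)) * e := by
    have h1 : e * ((r + x) + (r - x)) * e = e * (r + x) * e + e * (r - x) * e := by
      noncomm_ring
    have h2 : e * (r + x) * e = r + x := by rw [heu, hue]
    have h3 : e * (r - x) * e = 0 := by rw [hev, zero_mul]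
    rw [h1, h2, h3, add_zero]
  have k2 : r + x = e * r * e + e * r * e := by
    have h8 : (r + x) + (r - x) = r + r := by abel
    rw [key, h8]; noncomm_ring
  have hpos : S.le 0 (e * r * e) :=
    S.SA3 e heP.1 r (S.sqrtx_mem hx) (S.proj_nonneg heP) (S.sqrtx_nonneg hx)
  have h9 : S.le 0 (r + x) := by
    rw [k2]
    exact S.add_nonneg' (S.triple_mem heP.1 (S.sqrtx_mem hx))
      (S.triple_mem heP.1 (S.sqrtx_mem hx)) hpos hpos
  have h10 : S.le 0 ((2⁻¹ : ℝ) • (r + x)) := S.smul_nonneg _ (by norm_num) _ hvA h9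
  rw [posP, ← hr]; exact h10

lemma posP_comm {x : R} (hx : x ∈ S.A) {z : R} (hz : z ∈ S.A) (h : z * x = x * z) :
    z * S.posP x = S.posP x * z := by
  rw [posP, mul_smul_comm, smul_mul_assoc, mul_add, add_mul, S.sqrtx_comm hx hz h, h]

lemma negP_comm {x : R} (hx : x ∈ S.A) {z : R} (hz : z ∈ S.A) (h : z * x = x * z) :
    z * S.negP x = S.negP x * z := by
  rw [negP, mul_smul_comm, smul_mul_assoc, mul_sub, sub_mul, S.sqrtx_comm hx hz h, h]

lemma posP_of_nonpos {x : R} (hx : x ∈ S.A) (h : S.le x 0) : S.posP x = 0 := by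
  have hneg : S.le 0 (-x) := by
    have := (S.le_sub_iff hx S.zero_mem).1 h
    rwa [zero_sub] at this
  have heq : S.sqrtS (x * x) = -x := by
    apply S.sqrt_unique (S.sqrtx_mem hx) (S.neg_mem hx) (S.sqrtx_nonneg hx) hneg
    · rw [S.sqrtx_sq hx, neg_mul_neg]
    · rw [mul_neg, neg_mul, S.sqrtx_comm_x hx]
  rw [posP, heq]
  simp


/-! ### The halving step -/

lemma smul_one_mul' (r : ℝ) (y : R) : (r • (1 : R)) * y = r • y := by
  rw [smul_mul_assoc, one_mul]
lemma mul_smul_one' (r : ℝ) (y : R) : y * (r • (1 : R)) = r • y := by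
  rw [mul_smul_comm, mul_one]

lemma stepB {B : R} {c : ℝ} (hc : 0 < c) (hB : B ∈ S.A) (h0 : S.le 0 B)
    (h1 : S.le B ((2 * c) • 1)) :
    S.carr (S.posP (B - c • 1)) ∈ S.Proj ∧
    (∀ z ∈ S.A, z * B = B * z → z * S.carr (S.posP (B - c • 1)) = S.carr (S.posP (B - c • 1)) * z) ∧
    S.le 0 (B - c • S.carr (S.posP (B - c • 1))) ∧
    S.le (B - c • S.carr (S.posP (B - c • 1))) (c • 1) := by
  set x := B - c • (1 : R) with hxdef
  have hxA : x ∈ S.A := S.sub_mem' hB (S.smul_mem _ S.one_mem)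
  set xp := S.posP x with hxp
  set xm := S.negP x with hxm
  have hxpA : xp ∈ S.A := S.posP_mem hxA
  have hxmA : xm ∈ S.A := S.negP_mem hxA
  set P := S.carr xp with hP
  have hPP : P ∈ S.Proj := S.carr_proj hxpA
  have hPA : P ∈ S.A := hPP.1
  -- commutation
  have hcomm : ∀ z ∈ S.A, z * B = B * z → z * P = P * z := by
    intro z hz hzB
    have hzx : z * x = x * z := by
      rw [hxdef, mul_sub, sub_mul, hzB, mul_smul_one', smul_one_mul']
    have hzxp : z * xp = xp * z := S.posP_comm hxA hz hzx
    exact S.carr_comm hxpA hz hzxp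
  have hBx : B * x = x * B := by
    rw [hxdef, mul_sub, sub_mul, mul_smul_one', smul_one_mul']
  have hBP : B * P = P * B := hcomm B hB rfl
  have hxP : x * P = P * x := hcomm x hxA hBx.symm
  -- carrier identities
  have hPxp : P * xp = xp := S.carr_mul_self hxpA
  have hxpP : xp * P = xp := S.mul_carr_self hxpA
  have hPxm : P * xm = 0 := S.carr_mul_zero hxpA hxmA (S.posP_mul_negP hxA)
  have hxmP : xm * P = 0 := S.zero_mul_carr hxpA hxmA (S.posP_mul_negP hxA)
  have hxsub : xp - xm = x := S.posP_sub_negP x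
  have hxPeq : x * P = xp := by
    rw [← hxsub, sub_mul, hxpP, hxmP, sub_zero]
  have hPxeq : P * x = xp := by
    rw [← hxP, hxPeq]
  -- (ii) xp ≤ c•P
  have hgap : S.le 0 ((2 * c) • (1 : R) - B) := (S.le_sub_iff hB (S.smul_mem _ S.one_mem)).1 h1
  have hg2 : c • (1 : R) - x = (2 * c) • (1 : R) - B := by
    rw [hxdef]
    have h2c : (2 * c) • (1 : R) = c • 1 + c • 1 := by
      rw [two_mul, add_smul]
    rw [h2c]; abel
  have hPgP : S.le 0 (P * (c • (1 : R) - x) * P) := by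
    apply S.SA3 P hPA _ (S.sub_mem' (S.smul_mem _ S.one_mem) hxA) (S.proj_nonneg hPP)
    rw [hg2]; exact hgap
  have hPgP' : P * (c • (1 : R) - x) * P = c • P - xp := by
    have e1 : P * (c • (1 : R) - x) = c • P - xp := by
      rw [mul_sub, mul_smul_one', hPxeq]
    rw [e1, sub_mul, smul_mul_assoc, hPP.2, hxpP]
  have hxp_le : S.le xp (c • P) := by
    rw [S.le_sub_iff hxpA (S.smul_mem _ hPA)]
    rw [hPgP'] at hPgP; exact hPgP
  -- (iii) xm ≤ c•1
  set E := S.carr xm with hE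
  have hEP : E ∈ S.Proj := S.carr_proj hxmA
  have hExp : E * xp = 0 := S.carr_mul_zero hxmA hxpA (S.negP_mul_posP hxA)
  have hxpE : xp * E = 0 := S.zero_mul_carr hxmA hxpA (S.negP_mul_posP hxA)
  have hExm : E * xm = xm := S.carr_mul_self hxmA
  have hxmE : xm * E = xm := S.mul_carr_self hxmA
  have hEBE : S.le 0 (E * B * E) :=
    S.SA3 E hEP.1 B hB (S.proj_nonneg hEP) h0
  have hEBE' : E * B * E = c • E + (E * x * E) := by
    have hBcx : B = c • (1 : R) + x := by rw [hxdef]; abel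
    rw [hBcx, mul_add, add_mul, mul_smul_one', smul_mul_assoc, hEP.2]
  have hExE : E * x * E = -xm := by
    have h6 : E * x * E = E * xp * E - E * xm * E := by
      rw [← hxsub]; noncomm_ring
    rw [h6, hExp, zero_mul, hExm, hxmE, zero_sub]
  have hEBE'' : E * B * E = c • E - xm := by
    rw [hEBE', hExE, sub_eq_add_neg]
  have hxm_le_cE : S.le xm (c • E) := by
    rw [S.le_sub_iff hxmA (S.smul_mem _ hEP.1)]
    rw [hEBE''] at hEBE; exact hEBE
  have hxm_le : S.le xm (c • (1 : R)) := by
    have h2 : S.le (c • E) (c • (1 : R)) := by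
      rw [S.le_sub_iff (S.smul_mem _ hEP.1) (S.smul_mem _ S.one_mem), ← smul_sub]
      exact S.smul_nonneg c (le_of_lt hc) _ (S.sub_mem' S.one_mem hEP.1)
        (S.proj_nonneg (S.one_sub_proj hEP))
    exact S.le_trans xm hxmA (c • E) (S.smul_mem _ hEP.1) (c • (1 : R))
      (S.smul_mem _ S.one_mem) hxm_le_cE h2
  -- (iv) 0 ≤ B'
  refine ⟨hPP, hcomm, ?_, ?_⟩
  · -- B - c•P = xp + (c•(1-P) - xm)
    have hdecomp : B - c • P = xp + (c • ((1 : R) - P) - xm) := by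
      have h3 : xp + (c • ((1 : R) - P) - xm) = (xp - xm) + (c • (1 : R) - c • P) := by
        rw [smul_sub]; abel
      rw [h3, hxsub, hxdef]; abel
    rw [hdecomp]
    apply S.add_nonneg' hxpA
      (S.sub_mem' (S.smul_mem _ (S.sub_mem' S.one_mem hPA)) hxmA)
      (S.posP_nonneg hxA)
    -- c•(1-P) - xm = (1-P)*(c•1 - xm)*(1-P) ≥ 0
    have hQ : (1 : R) - P ∈ S.Proj := S.one_sub_proj hPP
    have hkey : ((1 : R) - P) * (c • (1 : R) - xm) * ((1 : R) - P)
        = c • ((1 : R) - P) - xm := by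
      have hxm1P : xm * ((1 : R) - P) = xm := by rw [mul_sub, mul_one, hxmP, sub_zero]
      have h1Pxm : ((1 : R) - P) * xm = xm := by rw [sub_mul, one_mul, hPxm, sub_zero]
      have step1 : ((1 : R) - P) * (c • (1 : R) - xm) = c • ((1 : R) - P) - xm := by
        rw [mul_sub, mul_smul_one', h1Pxm]
      rw [step1, sub_mul, smul_mul_assoc, hQ.2, hxm1P]
    have := S.SA3 ((1 : R) - P) hQ.1 (c • (1 : R) - xm)
      (S.sub_mem' (S.smul_mem _ S.one_mem) hxmA) (S.proj_nonneg hQ)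
      ((S.le_sub_iff hxmA (S.smul_mem _ S.one_mem)).1 hxm_le)
    rwa [hkey] at this
  · -- B - c•P ≤ c•1
    have hd2 : c • (1 : R) - (B - c • P) = (c • P - xp) + xm := by
      have h4 : B = x + c • (1 : R) := by rw [hxdef]; abel
      rw [h4, ← hxsub]; abel
    rw [S.le_sub_iff (S.sub_mem' hB (S.smul_mem _ hPA)) (S.smul_mem _ S.one_mem), hd2]
    exact S.add_nonneg' (S.sub_mem' (S.smul_mem _ hPA) hxpA) hxmA
      ((S.le_sub_iff hxpA (S.smul_mem _ hPA)).1 hxp_le)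
      (S.negP_nonneg hxA)


/-! ### Dyadic approximation sequence -/

noncomputable def seqB (a : R) : ℕ → R := fun n =>
  Nat.rec a (fun k bk =>
    bk - ((2⁻¹ : ℝ) ^ (k + 1)) • S.carr (S.posP (bk - ((2⁻¹ : ℝ) ^ (k + 1)) • 1))) n

noncomputable def seqP (a : R) (n : ℕ) : R :=
  S.carr (S.posP (S.seqB a n - ((2⁻¹ : ℝ) ^ (n + 1)) • 1))

lemma seqB_succ (a : R) (n : ℕ) :
    S.seqB a (n + 1) = S.seqB a n - ((2⁻¹ : ℝ) ^ (n + 1)) • S.seqP a n := rfl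

noncomputable def seqF (a : R) : ℕ → R := fun n =>
  Nat.rec 0 (fun k fk => fk + ((2⁻¹ : ℝ) ^ (k + 1)) • S.seqP a k) n

section seqLemmas

variable {a : R}

lemma seqB_inv (ha : a ∈ S.A) (h0 : S.le 0 a) (h1 : S.le a 1) (n : ℕ) :
    S.seqB a n ∈ S.A ∧ S.le 0 (S.seqB a n) ∧
    S.le (S.seqB a n) (((2⁻¹ : ℝ) ^ n) • 1) ∧ S.seqP a n ∈ S.Proj ∧
    (∀ z ∈ S.A, z * S.seqB a n = S.seqB a n * z → z * S.seqP a n = S.seqP a n * z) := by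
  induction n with
  | zero =>
    have hb1 : S.le a (((2⁻¹ : ℝ) ^ 0) • 1) := by
      rw [pow_zero, one_smul]; exact h1
    have hc : (0 : ℝ) < 2⁻¹ ^ (0 + 1) := by norm_num
    have h2c : (2 : ℝ) * 2⁻¹ ^ (0 + 1) = 2⁻¹ ^ 0 := by norm_num
    have hstep := S.stepB (B := a) hc ha h0 (by rw [h2c]; exact hb1)
    exact ⟨ha, h0, hb1, hstep.1, hstep.2.1⟩
  | succ n ih =>
    obtain ⟨hBA, hB0, hB1, hPn, hcomm⟩ := ih
    have hc : (0 : ℝ) < 2⁻¹ ^ (n + 1) := by positivity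
    have h2c : (2 : ℝ) * 2⁻¹ ^ (n + 1) = 2⁻¹ ^ n := by
      rw [pow_succ]; ring
    have hstep := S.stepB hc hBA hB0 (by rw [h2c]; exact hB1)
    have hBA' : S.seqB a (n + 1) ∈ S.A := by
      rw [S.seqB_succ]
      exact S.sub_mem' hBA (S.smul_mem _ hPn.1)
    have hB0' : S.le 0 (S.seqB a (n + 1)) := hstep.2.2.1
    have hB1' : S.le (S.seqB a (n + 1)) (((2⁻¹ : ℝ) ^ (n + 1)) • 1) := hstep.2.2.2
    -- next-level step lemma
    have hc' : (0 : ℝ) < 2⁻¹ ^ (n + 2) := by positivity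
    have h2c' : (2 : ℝ) * 2⁻¹ ^ (n + 2) = 2⁻¹ ^ (n + 1) := by
      rw [pow_succ]; ring
    have hstep' := S.stepB hc' hBA' hB0' (by rw [h2c']; exact hB1')
    exact ⟨hBA', hB0', hB1', hstep'.1, hstep'.2.1⟩

lemma seqB_mem (ha : a ∈ S.A) (h0 : S.le 0 a) (h1 : S.le a 1) (n : ℕ) :
    S.seqB a n ∈ S.A := (S.seqB_inv ha h0 h1 n).1

lemma seqP_proj (ha : a ∈ S.A) (h0 : S.le 0 a) (h1 : S.le a 1) (n : ℕ) :
    S.seqP a n ∈ S.Proj := (S.seqB_inv ha h0 h1 n).2.2.2.1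

lemma seqP_comm (ha : a ∈ S.A) (h0 : S.le 0 a) (h1 : S.le a 1) (n : ℕ)
    {z : R} (hz : z ∈ S.A) (h : z * S.seqB a n = S.seqB a n * z) :
    z * S.seqP a n = S.seqP a n * z := (S.seqB_inv ha h0 h1 n).2.2.2.2 z hz h

lemma seqB_comm_succ (ha : a ∈ S.A) (h0 : S.le 0 a) (h1 : S.le a 1) (n : ℕ)
    {z : R} (hz : z ∈ S.A) (h : z * S.seqB a n = S.seqB a n * z) :
    z * S.seqB a (n + 1) = S.seqB a (n + 1) * z := by
  rw [S.seqB_succ, mul_sub, sub_mul, h, mul_smul_comm, smul_mul_assoc,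
    S.seqP_comm ha h0 h1 n hz h]

/-- `p i` commutes with `b n` for `i ≤ n`. -/
lemma seqP_comm_seqB (ha : a ∈ S.A) (h0 : S.le 0 a) (h1 : S.le a 1) (i : ℕ) :
    ∀ n, i ≤ n → S.seqP a i * S.seqB a n = S.seqB a n * S.seqP a i := by
  intro n
  induction n with
  | zero =>
    intro hi
    have hi0 : i = 0 := Nat.le_zero.mp hi
    subst hi0
    exact (S.seqP_comm ha h0 h1 0 (S.seqB_mem ha h0 h1 0) rfl).symm
  | succ n ih =>
    intro hi
    rcases Nat.lt_or_ge i (n + 1) with hlt | hge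
    · have hin : i ≤ n := Nat.lt_succ_iff.1 hlt
      exact S.seqB_comm_succ ha h0 h1 n (S.seqP_proj ha h0 h1 i).1 (ih hin)
    · have : i = n + 1 := Nat.le_antisymm hi hge
      subst this
      exact (S.seqP_comm ha h0 h1 (n+1) (S.seqB_mem ha h0 h1 (n+1)) rfl).symm

/-- the `p i` commute pairwise -/
lemma seqP_comm_seqP (ha : a ∈ S.A) (h0 : S.le 0 a) (h1 : S.le a 1) (i j : ℕ) :
    S.seqP a i * S.seqP a j = S.seqP a j * S.seqP a i := by
  rcases le_total i j with h | h
  · exact S.seqP_comm ha h0 h1 j (S.seqP_proj ha h0 h1 i).1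
      (S.seqP_comm_seqB ha h0 h1 i j h)
  · exact (S.seqP_comm ha h0 h1 i (S.seqP_proj ha h0 h1 j).1
      (S.seqP_comm_seqB ha h0 h1 j i h)).symm

lemma seqF_mem (ha : a ∈ S.A) (h0 : S.le 0 a) (h1 : S.le a 1) (n : ℕ) :
    S.seqF a n ∈ S.A := by
  induction n with
  | zero => exact S.zero_mem
  | succ n ih =>
    exact S.add_mem ih (S.smul_mem _ (S.seqP_proj ha h0 h1 n).1)

lemma seqF_comm (ha : a ∈ S.A) (h0 : S.le 0 a) (h1 : S.le a 1)
    {z : R} (hz : ∀ i, z * S.seqP a i = S.seqP a i * z) (n : ℕ) :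
    z * S.seqF a n = S.seqF a n * z := by
  induction n with
  | zero => show z * 0 = 0 * z; rw [mul_zero, zero_mul]
  | succ n ih =>
    show z * (S.seqF a n + _ • S.seqP a n) = (S.seqF a n + _ • S.seqP a n) * z
    rw [mul_add, add_mul, ih, mul_smul_comm, smul_mul_assoc, hz n]

lemma seqF_comm_seqF (ha : a ∈ S.A) (h0 : S.le 0 a) (h1 : S.le a 1) (n k : ℕ) :
    S.seqF a n * S.seqF a k = S.seqF a k * S.seqF a n := by
  induction n with
  | zero => show (0 : R) * _ = _ * 0; rw [mul_zero, zero_mul]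
  | succ n ih =>
    show (S.seqF a n + _ • S.seqP a n) * S.seqF a k
        = S.seqF a k * (S.seqF a n + _ • S.seqP a n)
    rw [add_mul, mul_add, ih, smul_mul_assoc, mul_smul_comm,
      S.seqF_comm ha h0 h1 (fun i => S.seqP_comm_seqP ha h0 h1 n i) k]

lemma seqF_ascending (ha : a ∈ S.A) (h0 : S.le 0 a) (h1 : S.le a 1) (n : ℕ) :
    S.le (S.seqF a n) (S.seqF a (n + 1)) := by
  have hfA := S.seqF_mem ha h0 h1 n
  have hfA' := S.seqF_mem ha h0 h1 (n + 1)
  rw [S.le_sub_iff hfA hfA']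
  have : S.seqF a (n + 1) - S.seqF a n = ((2⁻¹ : ℝ) ^ (n + 1)) • S.seqP a n := by
    show S.seqF a n + _ • S.seqP a n - S.seqF a n = _
    abel
  rw [this]
  exact S.smul_nonneg _ (by positivity) _ (S.seqP_proj ha h0 h1 n).1
    (S.proj_nonneg (S.seqP_proj ha h0 h1 n))

lemma seqF_add_seqB (a : R) (n : ℕ) : S.seqF a n + S.seqB a n = a := by
  induction n with
  | zero => show (0 : R) + a = a; rw [zero_add]
  | succ n ih =>
    show S.seqF a n + _ • S.seqP a n + (S.seqB a n - _ • S.seqP a n) = a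
    calc S.seqF a n + ((2⁻¹ : ℝ) ^ (n+1)) • S.seqP a n
          + (S.seqB a n - ((2⁻¹ : ℝ) ^ (n+1)) • S.seqP a n)
        = S.seqF a n + S.seqB a n := by abel
    _ = a := ih

end seqLemmas

/-- An element of `A` commuting with all projections is central. -/
lemma central_of_comm_proj {m : R} (hmA : m ∈ S.A)
    (hm : ∀ e ∈ S.Proj, m * e = e * m) : S.IsCentral m := by
  intro a ha
  -- normalization
  obtain ⟨r, hr⟩ := S.orderUnit a ha
  obtain ⟨r', hr'⟩ := S.orderUnit (-a) (S.neg_mem ha)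
  set s : ℝ := |r| + |r'| + 1 with hs
  have hs0 : (0 : ℝ) < s := by positivity
  have hsmul : ∀ t t' : ℝ, t ≤ t' → S.le (t • (1 : R)) (t' • 1) := by
    intro t t' htt
    rw [S.le_sub_iff (S.smul_mem _ S.one_mem) (S.smul_mem _ S.one_mem), ← sub_smul]
    exact S.smul_one_nonneg (by linarith)
  have hub : S.le a (s • 1) := by
    refine S.le_trans a ha (r • 1) (S.smul_mem _ S.one_mem) (s • 1) (S.smul_mem _ S.one_mem)
      hr (hsmul r s ?_)
    have := le_abs_self r; linarith [abs_nonneg r']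
  have hlb : S.le 0 (a + s • 1) := by
    have h2 : S.le (-a) (s • 1) := by
      refine S.le_trans (-a) (S.neg_mem ha) (r' • 1) (S.smul_mem _ S.one_mem)
        (s • 1) (S.smul_mem _ S.one_mem) hr' (hsmul r' s ?_)
      have := le_abs_self r'; linarith [abs_nonneg r]
    have := (S.le_sub_iff (S.neg_mem ha) (S.smul_mem _ S.one_mem)).1 h2
    rwa [sub_neg_eq_add, add_comm] at this
  set a' := (2 * s)⁻¹ • (a + s • (1 : R)) with ha'def
  have ha'A : a' ∈ S.A := S.smul_mem _ (S.add_mem ha (S.smul_mem _ S.one_mem))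
  have ha'0 : S.le 0 a' :=
    S.smul_nonneg _ (by positivity) _ (S.add_mem ha (S.smul_mem _ S.one_mem)) hlb
  have ha'1 : S.le a' 1 := by
    rw [S.le_sub_iff ha'A S.one_mem]
    have hsne : s ≠ 0 := ne_of_gt hs0
    have key : (1 : R) - a' = (2 * s)⁻¹ • (s • 1 - a) := by
      rw [ha'def]
      match_scalars <;> field_simp <;> ring
    rw [key]
    apply S.smul_nonneg _ (by positivity) _ (S.sub_mem' (S.smul_mem _ S.one_mem) ha)
    exact (S.le_sub_iff ha (S.smul_mem _ S.one_mem)).1 hub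
  -- apply SA8
  have hcomm' : a' * m = m * a' := by
    apply S.SA8 a' ha'A m hmA (S.seqF a')
      (S.seqF_mem ha'A ha'0 ha'1)
      (fun n => (S.seqF_comm ha'A ha'0 ha'1
        (fun i => hm (S.seqP a' i) (S.seqP_proj ha'A ha'0 ha'1 i)) n).symm)
      (S.seqF_comm_seqF ha'A ha'0 ha'1)
      (S.seqF_ascending ha'A ha'0 ha'1)
    intro ε hε
    obtain ⟨N, hN⟩ := exists_pow_lt_of_lt_one hε (by norm_num : (2⁻¹ : ℝ) < 1)
    refine ⟨N, fun n hn => ?_⟩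
    have hfb : a' - S.seqF a' n = S.seqB a' n := by
      have h := S.seqF_add_seqB a' n
      calc a' - S.seqF a' n = (S.seqF a' n + S.seqB a' n) - S.seqF a' n := by rw [h]
      _ = S.seqB a' n := by abel
    have hpow : (2⁻¹ : ℝ) ^ n ≤ ε := by
      calc (2⁻¹ : ℝ) ^ n ≤ 2⁻¹ ^ N :=
        pow_le_pow_of_le_one (by norm_num) (by norm_num) hn
      _ ≤ ε := le_of_lt hN
    constructor
    · rw [hfb]
      refine S.le_trans _ (S.seqB_mem ha'A ha'0 ha'1 n) _ (S.smul_mem _ S.one_mem)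
        _ (S.smul_mem _ S.one_mem) (S.seqB_inv ha'A ha'0 ha'1 n).2.2.1 ?_
      rw [S.le_sub_iff (S.smul_mem _ S.one_mem) (S.smul_mem _ S.one_mem), ← sub_smul]
      exact S.smul_one_nonneg (by linarith)
    · rw [hfb, neg_smul]
      rw [S.le_sub_iff (S.neg_mem (S.smul_mem _ S.one_mem)) (S.seqB_mem ha'A ha'0 ha'1 n),
        sub_neg_eq_add]
      exact S.add_nonneg' (S.seqB_mem ha'A ha'0 ha'1 n) (S.smul_mem _ S.one_mem)
        (S.seqB_inv ha'A ha'0 ha'1 n).2.1 (S.smul_one_nonneg (le_of_lt hε))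
  -- convert back
  have hsne : s ≠ 0 := ne_of_gt hs0
  have haeq : a = (2 * s) • a' - s • (1 : R) := by
    rw [ha'def]
    match_scalars <;> field_simp <;> try ring
  have h6 : m * (s • (1 : R)) = (s • (1 : R)) * m := by
    rw [mul_smul_one', smul_one_mul']
  have h7 : m * ((2 * s) • a') = ((2 * s) • a') * m := by
    rw [mul_smul_comm, smul_mul_assoc, hcomm']
  rw [haeq, mul_sub, sub_mul, h6, h7]


/-! ### Symmetries and equivalence of projections -/

lemma sym_conj_proj {s y : R} (hs : S.IsSymmetry s) (hy : y ∈ S.Proj) :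
    s * y * s ∈ S.Proj := by
  refine ⟨S.triple_mem hs.1 hy.1, ?_⟩
  calc (s * y * s) * (s * y * s) = s * (y * (s * s) * y) * s := by noncomm_ring
  _ = s * (y * y) * s := by rw [hs.2, mul_one]
  _ = s * y * s := by rw [hy.2]

lemma sym_conj_conj {s y : R} (hs : S.IsSymmetry s) : s * (s * y * s) * s = y := by
  calc s * (s * y * s) * s = (s * s) * y * (s * s) := by noncomm_ring
  _ = y := by rw [hs.2, one_mul, mul_one]

lemma sym_conj_le {s y z : R} (hs : S.IsSymmetry s) (hy : y ∈ S.Proj) (hz : z ∈ S.Proj)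
    (h : S.le y z) : S.le (s * y * s) (s * z * s) := by
  obtain ⟨h1, h2⟩ := (S.proj_le_iff hy hz).1 h
  apply S.proj_le_of_mul (S.sym_conj_proj hs hy) (S.sym_conj_proj hs hz)
  have e1 : (s * y * s) * (s * z * s) = s * (y * (s * s) * z) * s := by noncomm_ring
  rw [e1, hs.2, mul_one, h1]

lemma conj_central_le {c s y : R} (hcP : c ∈ S.Proj) (hcen : S.IsCentral c)
    (hs : S.IsSymmetry s) (hy : y ∈ S.Proj) (h : S.le y c) : S.le (s * y * s) c := by
  obtain ⟨h1, h2⟩ := (S.proj_le_iff hy hcP).1 h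
  apply S.proj_le_of_mul (S.sym_conj_proj hs hy) hcP
  have hsc : s * c = c * s := (hcen s hs.1).symm
  have e1 : s * y * s * c = s * y * c * s := by
    rw [mul_assoc (s * y) s c, hsc, ← mul_assoc]
  rw [e1, mul_assoc s y c, h1]

lemma equiv_le_central {c : R} (hcP : c ∈ S.Proj) (hcen : S.IsCentral c)
    {x q₁ : R} (hE : S.Equiv x q₁) (h1 : S.le q₁ c) : x ∈ S.Proj → S.le x c := by
  induction hE using Relation.ReflTransGen.head_induction_on with
  | refl => intro _; exact h1
  | head hstep htail ih =>
    rename_i u v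
    intro hxP
    obtain ⟨s, hs, hrel⟩ := hstep
    have hvP : v ∈ S.Proj := by rw [← hrel]; exact S.sym_conj_proj hs hxP
    have hvc := ih hvP
    have hux : u = s * v * s := by rw [← hrel, S.sym_conj_conj hs]
    rw [hux]
    exact S.conj_central_le hcP hcen hs hvP hvc

/-- symmetry `1 - 2e` associated with a projection -/
lemma sym_one_sub {e : R} (he : e ∈ S.Proj) : S.IsSymmetry (1 - (2 : ℝ) • e) := by
  refine ⟨S.sub_mem' S.one_mem (S.smul_mem _ he.1), ?_⟩
  have k : ((2 : ℝ) • e) * ((2 : ℝ) • e) = (4 : ℝ) • e := by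
    rw [smul_mul_assoc, mul_smul_comm, smul_smul, he.2]; norm_num
  calc (1 - (2 : ℝ) • e) * (1 - (2 : ℝ) • e)
      = 1 - (2 : ℝ) • e - (2 : ℝ) • e + ((2 : ℝ) • e) * ((2 : ℝ) • e) := by
        simp only [sub_mul, mul_sub, one_mul, mul_one]; abel
  _ = 1 := by rw [k]; module

/-- if `m` commutes with all symmetries, it commutes with all projections -/
lemma comm_proj_of_comm_sym {m : R} (hmA : m ∈ S.A)
    (hsym : ∀ s, S.IsSymmetry s → m * s = s * m) :
    ∀ e ∈ S.Proj, m * e = e * m := by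
  intro e he
  have h := hsym _ (S.sym_one_sub he)
  have h2 : (2 : ℝ) • (m * e) = (2 : ℝ) • (e * m) := by
    have e1 : m * (1 - (2 : ℝ) • e) = m - (2 : ℝ) • (m * e) := by
      rw [mul_sub, mul_one, mul_smul_comm]
    have e2 : (1 - (2 : ℝ) • e) * m = m - (2 : ℝ) • (e * m) := by
      rw [sub_mul, one_mul, smul_mul_assoc]
    rw [e1, e2] at h
    have h4 := congrArg (fun x => m - x) h
    simpa [sub_sub_cancel] using h4
  calc m * e = (2⁻¹ : ℝ) • ((2 : ℝ) • (m * e)) := by rw [smul_smul]; norm_num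
  _ = (2⁻¹ : ℝ) • ((2 : ℝ) • (e * m)) := by rw [h2]
  _ = e * m := by rw [smul_smul]; norm_num


end SynapticAlgebra

/-- Theorem 7.7: if the projection lattice `P` is complete and `p ∈ P`, then
the central cover of `p` is `γp = ⋁ {q ∈ P : q ≼ p}`. -/
theorem stmt16 {R : Type*} [Ring R] [Algebra ℝ R] (S : SynapticAlgebra R)
    (hcomp : S.ProjComplete) (p : R) (hp : p ∈ S.Proj)
    (c : R) (hc : S.IsCentralCover p c) :
    S.IsSupOf {q | q ∈ S.Proj ∧ S.SubEquiv q p} c := by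
  obtain ⟨hcP, hcCen, hpc, hmin⟩ := hc
  set Q : Set R := {q | q ∈ S.Proj ∧ S.SubEquiv q p} with hQ
  have hQsub : Q ⊆ S.Proj := fun q hq => hq.1
  refine ⟨hcP, ?_, ?_⟩
  · rintro q ⟨hqP, q₁, hq₁P, hq₁p, hEq⟩
    have hq₁c : S.le q₁ c := S.le_trans q₁ hq₁P.1 p hp.1 c hcP.1 hq₁p hpc
    exact S.equiv_le_central hcP hcCen hEq hq₁c hqP
  · intro b hbP hbub
    obtain ⟨m, hmP, hmub, hmlub⟩ := (hcomp _ hQsub).1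
    have hQinv : ∀ s, S.IsSymmetry s → ∀ q, q ∈ Q → s * q * s ∈ Q := by
      rintro s hs q ⟨hqP, q₁, hq₁P, hq₁p, hEq⟩
      refine ⟨S.sym_conj_proj hs hqP, q₁, hq₁P, hq₁p, ?_⟩
      exact Relation.ReflTransGen.head ⟨s, hs, S.sym_conj_conj hs⟩ hEq
    have hub_conj : ∀ s, S.IsSymmetry s → ∀ u, u ∈ S.Proj →
        (∀ q ∈ Q, S.le q u) → (∀ q ∈ Q, S.le q (s * u * s)) := by
      intro s hs u huP hu q hq
      have h1 : S.le (s * q * s) u := hu _ (hQinv s hs q hq)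
      have h2 := S.sym_conj_le hs (hQinv s hs q hq).1 huP h1
      rwa [S.sym_conj_conj hs] at h2
    have hsms : ∀ s, S.IsSymmetry s → s * m * s = m := by
      intro s hs
      have h1 : S.le m (s * m * s) :=
        hmlub _ (S.sym_conj_proj hs hmP) (hub_conj s hs m hmP hmub)
      have h2 := S.sym_conj_le hs hmP (S.sym_conj_proj hs hmP) h1
      rw [S.sym_conj_conj hs] at h2
      exact S.le_antisymm _ (S.sym_conj_proj hs hmP).1 _ hmP.1 h2 h1
    have hms : ∀ s, S.IsSymmetry s → m * s = s * m := by
      intro s hs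
      calc m * s = (s * s) * (m * s) := by rw [hs.2, one_mul]
      _ = s * (s * m * s) := by noncomm_ring
      _ = s * m := by rw [hsms s hs]
    have hmproj := S.comm_proj_of_comm_sym hmP.1 hms
    have hmcen : S.IsCentral m := S.central_of_comm_proj hmP.1 hmproj
    have hpm : S.le p m :=
      hmub p ⟨hp, p, hp, S.le_refl p hp.1, Relation.ReflTransGen.refl⟩
    have hcm : S.le c m := hmin m hmP hmcen hpm
    have hmb : S.le m b := hmlub b hbP hbub
    exact S.le_trans c hcP.1 m hmP.1 b hbP.1 hcm hmb
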